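/- arXiv:1709.04832 — 3 statements merged into one kernel-verified Lean document; each statement's English description precedes it below -/
import Mathlib

section
/- Let L be an NM-algebra and ∀ : L → L a unary map. Then ∀ is a strong universal quantifier on L if and only if ∀ is a modal operator on L (i.e. satisfies (M1) ∀1 = 1, (M2) ∀(x ∨ y) ≤ ∀x ∨ ∀y, (M3) ∀(x → y) ≤ ∀x → ∀y, (M4) ∀x ≤ ∀∀x, (M5) ∀x ≤ x) that additionally satisfies the condition (∗): ∀(∀x → ∀y) = ∀x → ∀y for all x, y ∈ L. -/
/-- An NM-algebra: a bounded lattice with a commutative monoid operation `odot`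
(unit `⊤`) and a residuated implication `imp`, satisfying prelinearity, the weak
nilpotent minimum identity and involution of the negation `nneg x = imp x ⊥`. -/
class NMAlgebra (L : Type*) extends Lattice L, BoundedOrder L where
  odot : L → L → L
  imp : L → L → L
  odot_comm : ∀ x y : L, odot x y = odot y x
  odot_assoc : ∀ x y z : L, odot (odot x y) z = odot x (odot y z)
  odot_top : ∀ x : L, odot x ⊤ = x
  residuation : ∀ x y z : L, odot x y ≤ z ↔ x ≤ imp y z
  prelinearity : ∀ x y : L, imp x y ⊔ imp y x = ⊤
  wnm : ∀ x y : L, imp (odot x y) ⊥ ⊔ imp (x ⊓ y) (odot x y) = ⊤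
  involution : ∀ x : L, imp (imp x ⊥) ⊥ = x

namespace NMAlgebra

variable {L : Type*} [NMAlgebra L]

/-- Negation `¬x := x → 0`. -/
def nneg (x : L) : L := imp x ⊥

/-- `x ⊕ y := ¬x → y`. -/
def oplus (x y : L) : L := imp (nneg x) y

/-- `n`-fold `⊙`-power, with `opow a 0 = ⊤`. -/
def opow (a : L) : ℕ → L
  | 0 => ⊤
  | n + 1 => odot a (opow a n)

/-- A universal quantifier on an NM-algebra: (U1)–(U4). -/
def IsUQ (q : L → L) : Prop :=
  (∀ x : L, q x ≤ x) ∧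
  (∀ x y : L, q (imp (nneg x) (q y)) = imp (nneg (q x)) (q y)) ∧
  (∀ x y : L, q (imp (q x) y) = imp (q x) (q y)) ∧
  (∀ x y : L, q (x ⊔ q y) = q x ⊔ q y)

/-- A strong universal quantifier on an NM-algebra: (U1),(U2),(U3),(U4'). -/
def IsStrongUQ (q : L → L) : Prop :=
  (∀ x : L, q x ≤ x) ∧
  (∀ x y : L, q (imp (nneg x) (q y)) = imp (nneg (q x)) (q y)) ∧
  (∀ x y : L, q (imp (q x) y) = imp (q x) (q y)) ∧
  (∀ x y : L, q (x ⊔ y) = q x ⊔ q y)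

/-- A filter of an NM-algebra: nonempty, closed under `⊙` and upward closed. -/
def IsNMFilter (F : Set L) : Prop :=
  F.Nonempty ∧ (∀ x ∈ F, ∀ y ∈ F, odot x y ∈ F) ∧ ∀ x ∈ F, ∀ y : L, x ≤ y → y ∈ F

/-- A monadic filter of `(L, q)`: a filter closed under `q`. -/
def IsMonadicFilter (q : L → L) (F : Set L) : Prop :=
  IsNMFilter F ∧ ∀ x ∈ F, q x ∈ F

/-- The smallest monadic filter containing `X`. -/
def genMF (q : L → L) (X : Set L) : Set L :=
  ⋂₀ {F : Set L | IsMonadicFilter q F ∧ X ⊆ F}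

/-- The smallest filter containing `X`. -/
def genF (X : Set L) : Set L :=
  ⋂₀ {F : Set L | IsNMFilter F ∧ X ⊆ F}

/-- A filter of the subalgebra carried by `S ⊆ L`: a nonempty subset of `S`
closed under `⊙` and upward closed within `S`. -/
def IsFilterOn (S : Set L) (G : Set L) : Prop :=
  G ⊆ S ∧ G.Nonempty ∧ (∀ x ∈ G, ∀ y ∈ G, odot x y ∈ G) ∧
    ∀ x ∈ G, ∀ y ∈ S, x ≤ y → y ∈ G

/-- A prime monadic filter: a proper monadic filter `P` such that
`F₁ ∩ F₂ ⊆ P` implies `F₁ ⊆ P` or `F₂ ⊆ P` for monadic filters `F₁, F₂`. -/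
def IsPrimeMF (q : L → L) (P : Set L) : Prop :=
  IsMonadicFilter q P ∧ P ≠ Set.univ ∧
    ∀ F₁ F₂ : Set L, IsMonadicFilter q F₁ → IsMonadicFilter q F₂ →
      F₁ ∩ F₂ ⊆ P → F₁ ⊆ P ∨ F₂ ⊆ P

/-- A prime filter: a proper filter `P` with `x ⊔ y ∈ P → x ∈ P ∨ y ∈ P`. -/
def IsPrimeF (P : Set L) : Prop :=
  IsNMFilter P ∧ P ≠ Set.univ ∧ ∀ x y : L, x ⊔ y ∈ P → x ∈ P ∨ y ∈ P

/-- A monadic congruence on `(L, q)`: an equivalence relation compatible with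
`⊓`, `⊔`, `⊙`, `→` and with `q`. -/
def IsMonadicCong (q : L → L) (θ : L → L → Prop) : Prop :=
  Equivalence θ ∧
  (∀ a b c d : L, θ a b → θ c d → θ (a ⊓ c) (b ⊓ d)) ∧
  (∀ a b c d : L, θ a b → θ c d → θ (a ⊔ c) (b ⊔ d)) ∧
  (∀ a b c d : L, θ a b → θ c d → θ (odot a c) (odot b d)) ∧
  (∀ a b c d : L, θ a b → θ c d → θ (imp a c) (imp b d)) ∧
  ∀ a b : L, θ a b → θ (q a) (q b)

end NMAlgebra

open NMAlgebra

section AuxLemmas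

variable {L : Type*} [NMAlgebra L]

lemma aux_top_odot (a : L) : odot ⊤ a = a := by
  rw [odot_comm]; exact odot_top a

lemma aux_le_iff_imp_top {a b : L} : a ≤ b ↔ imp a b = ⊤ := by
  constructor
  · intro h
    refine le_antisymm le_top ?_
    rw [← residuation, aux_top_odot]
    exact h
  · intro h
    have h' : (⊤ : L) ≤ imp a b := h.ge
    rw [← residuation, aux_top_odot] at h'
    exact h'

lemma aux_imp_self (a : L) : imp a a = ⊤ := aux_le_iff_imp_top.mp le_rfl

lemma aux_imp_top (a : L) : imp a ⊤ = ⊤ := aux_le_iff_imp_top.mp le_top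

lemma aux_odot_le_left {a b : L} (h : a ≤ b) (c : L) : odot c a ≤ odot c b := by
  have hb : b ≤ imp c (odot c b) := by
    rw [← residuation, odot_comm]
  have ha : a ≤ imp c (odot c b) := h.trans hb
  rw [← residuation] at ha
  rwa [odot_comm] at ha

lemma aux_mp (a b : L) : odot (imp a b) a ≤ b := (residuation _ _ _).mpr le_rfl

lemma aux_imp_le_imp_right {b c : L} (a : L) (h : b ≤ c) : imp a b ≤ imp a c := by
  rw [← residuation]
  exact (aux_mp a b).trans h

lemma aux_imp_le_imp_left {a b : L} (h : a ≤ b) (c : L) : imp b c ≤ imp a c := by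
  rw [← residuation]
  calc odot (imp b c) a ≤ odot (imp b c) b := aux_odot_le_left h _
    _ ≤ c := aux_mp b c

lemma aux_imp_exchange {a b c : L} : a ≤ imp b c ↔ b ≤ imp a c := by
  rw [← residuation, ← residuation, odot_comm]

lemma aux_nneg_antitone {a b : L} (h : a ≤ b) : nneg b ≤ nneg a :=
  aux_imp_le_imp_left h ⊥

lemma aux_nneg_nneg (a : L) : nneg (nneg a) = a := involution a

end AuxLemmas

/-- Theorem 3.17: `∀` is a strong universal quantifier iff it is a modal
operator satisfying `(∗)`: `∀(∀x → ∀y) = ∀x → ∀y`. -/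
theorem strong_monadic_nm_iff_modal_with_star
    {L : Type*} [NMAlgebra L] (q : L → L) :
    IsStrongUQ q ↔
    ((q (⊤ : L) = ⊤) ∧
     (∀ x y : L, q (x ⊔ y) ≤ q x ⊔ q y) ∧
     (∀ x y : L, q (imp x y) ≤ imp (q x) (q y)) ∧
     (∀ x : L, q x ≤ q (q x)) ∧
     (∀ x : L, q x ≤ x) ∧
     (∀ x y : L, q (imp (q x) (q y)) = imp (q x) (q y))) := by
  constructor
  · rintro ⟨u1, u2, u3, u4⟩
    have mono : ∀ {x y : L}, x ≤ y → q x ≤ q y := by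
      intro x y h
      have h' : x ⊔ y = y := sup_eq_right.mpr h
      calc q x ≤ q x ⊔ q y := le_sup_left
        _ = q (x ⊔ y) := (u4 x y).symm
        _ = q y := by rw [h']
    have m1 : q (⊤ : L) = ⊤ := by
      have h1 := u3 ⊤ ⊤
      rw [aux_imp_top, aux_imp_self] at h1
      exact h1
    have m4 : ∀ x : L, q x ≤ q (q x) := by
      intro x
      have h1 := u3 x (q x)
      rw [aux_imp_self, m1] at h1
      exact aux_le_iff_imp_top.mpr h1.symm
    have idem : ∀ x : L, q (q x) = q x := fun x => le_antisymm (u1 _) (m4 x)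
    have m3 : ∀ x y : L, q (imp x y) ≤ imp (q x) (q y) := by
      intro x y
      calc q (imp x y) ≤ q (imp (q x) y) := mono (aux_imp_le_imp_left (u1 x) y)
        _ = imp (q x) (q y) := u3 x y
    have star : ∀ x y : L, q (imp (q x) (q y)) = imp (q x) (q y) := by
      intro x y
      rw [u3 x (q y), idem]
    exact ⟨m1, fun x y => (u4 x y).le, m3, m4, u1, star⟩
  · rintro ⟨m1, m2, m3, m4, m5, star⟩
    have mono : ∀ {x y : L}, x ≤ y → q x ≤ q y := by
      intro x y h
      have h3 := m3 x y
      rw [aux_le_iff_imp_top.mp h, m1] at h3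
      exact aux_le_iff_imp_top.mpr (le_antisymm le_top h3)
    have idem : ∀ x : L, q (q x) = q x := fun x => le_antisymm (m5 _) (m4 x)
    have qbot : q (⊥ : L) = ⊥ := le_antisymm (m5 ⊥) bot_le
    have fix_imp : ∀ {a c : L}, q a = a → q c = c → q (imp a c) = imp a c := by
      intro a c ha hc
      have h := star a c
      rwa [ha, hc] at h
    have fix_nneg : ∀ {a : L}, q a = a → q (nneg a) = nneg a := by
      intro a ha
      exact fix_imp ha qbot
    have u3 : ∀ x y : L, q (imp (q x) y) = imp (q x) (q y) := by
      intro x y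
      refine le_antisymm ?_ ?_
      · have h := m3 (q x) y
        rwa [idem] at h
      · calc imp (q x) (q y) = q (imp (q x) (q y)) := (star x y).symm
          _ ≤ q (imp (q x) y) := mono (aux_imp_le_imp_right _ (m5 y))
    have u2 : ∀ x y : L, q (imp (nneg x) (q y)) = imp (nneg (q x)) (q y) := by
      intro x y
      set b := q (imp (nneg x) (q y)) with hbdef
      have hb : q b = b := idem _
      have hfix_nqx : q (nneg (q x)) = nneg (q x) := fix_nneg (idem x)
      have hrhs_fix : q (imp (nneg (q x)) (q y)) = imp (nneg (q x)) (q y) :=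
        fix_imp hfix_nqx (idem y)
      refine le_antisymm ?_ ?_
      · -- b ≤ imp (nneg (q x)) (q y)
        have he : q (imp b (q y)) = imp b (q y) := fix_imp hb (idem y)
        set e := imp b (q y) with hedef
        have h1 : nneg x ≤ e := by
          have hb5 : b ≤ imp (nneg x) (q y) := m5 _
          exact aux_imp_exchange.mp hb5
        have h2 : nneg e ≤ x := by
          have := aux_nneg_antitone h1
          rwa [aux_nneg_nneg] at this
        have h3 : nneg e ≤ q x := by
          calc nneg e = q (nneg e) := (fix_nneg he).symm
            _ ≤ q x := mono h2
        have h4 : nneg (q x) ≤ e := by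
          have := aux_nneg_antitone h3
          rwa [aux_nneg_nneg] at this
        exact aux_imp_exchange.mp h4
      · calc imp (nneg (q x)) (q y) = q (imp (nneg (q x)) (q y)) := hrhs_fix.symm
          _ ≤ q (imp (nneg x) (q y)) :=
            mono (aux_imp_le_imp_left (aux_nneg_antitone (m5 x)) _)
    have u4 : ∀ x y : L, q (x ⊔ y) = q x ⊔ q y := fun x y =>
      le_antisymm (m2 x y) (sup_le (mono le_sup_left) (mono le_sup_right))
    exact ⟨m5, u2, u3, u4⟩
end

section
/- Let (L,∀) be a monadic NM-algebra and F a filter of L. Then F is a monadic filter of (L,∀) if and only if F equals the filter of L generated by F ∩ L_∀, where L_∀ = {x ∈ L | ∀x = x}. -/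
open NMAlgebra

section Aux

variable {L : Type*} [NMAlgebra L]

lemma nm_imp_self (a : L) : imp a a = (⊤ : L) :=
  le_antisymm le_top ((residuation ⊤ a a).mp (by rw [odot_comm, odot_top]))

lemma nm_imp_top (a : L) : imp a ⊤ = (⊤ : L) :=
  le_antisymm le_top ((residuation ⊤ a ⊤).mp le_top)

lemma nm_odot_le_left {a c : L} (h : a ≤ c) (b : L) : odot a b ≤ odot c b :=
  (residuation a b _).mpr (h.trans ((residuation c b _).mp le_rfl))

lemma nm_odot_le_odot {a b c d : L} (h1 : a ≤ c) (h2 : b ≤ d) :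
    odot a b ≤ odot c d :=
  (nm_odot_le_left h1 b).trans
    (by rw [odot_comm c b, odot_comm c d]; exact nm_odot_le_left h2 c)

lemma nm_imp_odot (a b c : L) : imp (odot a b) c = imp a (imp b c) := by
  have key : ∀ x : L, x ≤ imp (odot a b) c ↔ x ≤ imp a (imp b c) := by
    intro x
    rw [← residuation, ← residuation, ← residuation, odot_assoc]
  exact le_antisymm ((key _).mp le_rfl) ((key _).mpr le_rfl)

lemma nm_nneg_nneg (x : L) : nneg (nneg x) = x := involution x

lemma nm_odot_eq (a b : L) : odot a b = nneg (imp a (nneg b)) := by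
  have h : nneg (odot a b) = imp a (nneg b) := nm_imp_odot a b ⊥
  rw [← h, nm_nneg_nneg]

variable {q : L → L}

lemma uq_top (hq : IsUQ q) : q ⊤ = (⊤ : L) := by
  have h := hq.2.2.1 ⊤ ⊤
  rwa [nm_imp_top, nm_imp_self] at h

lemma uq_bot (hq : IsUQ q) : q ⊥ = (⊥ : L) := le_antisymm (hq.1 ⊥) bot_le

lemma uq_idem (hq : IsUQ q) (x : L) : q (q x) = q x := by
  have h := hq.2.2.1 x (q x)
  rw [nm_imp_self, uq_top hq] at h
  refine le_antisymm (hq.1 _) ?_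
  have h2 : odot ⊤ (q x) ≤ q (q x) := (residuation ⊤ (q x) (q (q x))).mpr h.le
  rwa [odot_comm, odot_top] at h2

lemma uq_mono (hq : IsUQ q) {a b : L} (h : a ≤ b) : q a ≤ q b := by
  have h4 := hq.2.2.2 b a
  rw [sup_eq_left.mpr ((hq.1 a).trans h)] at h4
  rw [h4]
  exact le_sup_right

lemma uq_fix_nneg (hq : IsUQ q) (x : L) : q (nneg (q x)) = nneg (q x) := by
  have h := hq.2.2.1 x ⊥
  rwa [uq_bot hq] at h

lemma uq_fix_odot (hq : IsUQ q) (x y : L) :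
    q (odot (q x) (q y)) = odot (q x) (q y) := by
  have hw : q (imp (q x) (nneg (q y))) = imp (q x) (nneg (q y)) := by
    have h := hq.2.2.1 x (nneg (q y))
    rwa [uq_fix_nneg hq y] at h
  rw [nm_odot_eq (q x) (q y)]
  calc q (nneg (imp (q x) (nneg (q y))))
      = q (nneg (q (imp (q x) (nneg (q y))))) := by rw [hw]
    _ = nneg (q (imp (q x) (nneg (q y)))) := uq_fix_nneg hq _
    _ = nneg (imp (q x) (nneg (q y))) := by rw [hw]

lemma uq_odot_le (hq : IsUQ q) (x y : L) :
    odot (q x) (q y) ≤ q (odot x y) :=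
  calc odot (q x) (q y) = q (odot (q x) (q y)) := (uq_fix_odot hq x y).symm
    _ ≤ q (odot x y) := uq_mono hq (nm_odot_le_odot (hq.1 x) (hq.1 y))

lemma nm_top_mem_filter {G : Set L} (hG : IsNMFilter G) : (⊤ : L) ∈ G := by
  obtain ⟨a, ha⟩ := hG.1
  exact hG.2.2 a ha ⊤ le_top

lemma nm_mem_genF_iff {X : Set L} {x : L} :
    x ∈ genF X ↔ ∀ G : Set L, IsNMFilter G → X ⊆ G → x ∈ G := by
  constructor
  · intro h G hG hXG
    exact h G ⟨hG, hXG⟩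
  · intro h G hG
    exact h G hG.1 hG.2

lemma nm_subset_genF (X : Set L) : X ⊆ genF X := by
  intro x hx
  exact nm_mem_genF_iff.mpr fun G _ hXG => hXG hx

lemma nm_genF_filter (X : Set L) : IsNMFilter (genF X) := by
  refine ⟨⟨⊤, ?_⟩, ?_, ?_⟩
  · exact nm_mem_genF_iff.mpr fun G hG _ => nm_top_mem_filter hG
  · intro x hx y hy
    exact nm_mem_genF_iff.mpr fun G hG hXG =>
      hG.2.1 x (nm_mem_genF_iff.mp hx G hG hXG) y (nm_mem_genF_iff.mp hy G hG hXG)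
  · intro x hx y hxy
    exact nm_mem_genF_iff.mpr fun G hG hXG =>
      hG.2.2 x (nm_mem_genF_iff.mp hx G hG hXG) y hxy

end Aux


/-- Theorem 4.5: a filter `F` is a monadic filter iff `F` is generated by its
fixed-point part `F ∩ L_∀`. -/
theorem monadic_nm_monadic_filter_iff_generated_by_fixedpoints
    {L : Type*} [NMAlgebra L] (q : L → L) (hq : IsUQ q)
    (F : Set L) (hF : IsNMFilter F) :
    IsMonadicFilter q F ↔ F = genF (F ∩ {x : L | q x = x}) := by
  constructor
  · intro hMF
    apply Set.Subset.antisymm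
    · intro x hx
      refine nm_mem_genF_iff.mpr fun G hG hXG => ?_
      have hqx : q x ∈ F ∩ {x : L | q x = x} := ⟨hMF.2 x hx, uq_idem hq x⟩
      exact hG.2.2 (q x) (hXG hqx) x (hq.1 x)
    · intro x hx
      exact nm_mem_genF_iff.mp hx F hF Set.inter_subset_left
  · intro hgen
    refine ⟨hF, ?_⟩
    set X : Set L := F ∩ {x : L | q x = x} with hX
    set G : Set L := {x : L | x ∈ genF X ∧ q x ∈ genF X} with hGdef
    have hGen := nm_genF_filter X
    have hGfilter : IsNMFilter G := by
      refine ⟨⟨⊤, ?_⟩, ?_, ?_⟩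
      · exact ⟨hGen.2.2 ⊤ (nm_top_mem_filter hGen) ⊤ le_rfl,
          by rw [uq_top hq]; exact nm_top_mem_filter hGen⟩
      · rintro x ⟨hx1, hx2⟩ y ⟨hy1, hy2⟩
        refine ⟨hGen.2.1 x hx1 y hy1, ?_⟩
        have hprod : odot (q x) (q y) ∈ genF X := hGen.2.1 (q x) hx2 (q y) hy2
        exact hGen.2.2 _ hprod _ (uq_odot_le hq x y)
      · rintro x ⟨hx1, hx2⟩ y hxy
        exact ⟨hGen.2.2 x hx1 y hxy, hGen.2.2 (q x) hx2 (q y) (uq_mono hq hxy)⟩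
    have hXG : X ⊆ G := by
      rintro a ⟨haF, haFix⟩
      refine ⟨nm_subset_genF X ⟨haF, haFix⟩, ?_⟩
      rw [show q a = a from haFix]
      exact nm_subset_genF X ⟨haF, haFix⟩
    intro x hx
    have hxgen : x ∈ genF X := by rw [← hgen]; exact hx
    have hxG : x ∈ G := nm_mem_genF_iff.mp hxgen G hGfilter hXG
    rw [hgen]
    exact hxG.2
end

section
/- Let (L,∀) be a monadic NM-algebra. Then the map sending a monadic filter F to the relation θ_F defined by (x, y) ∈ θ_F iff x → y ∈ F and y → x ∈ F, is a bijection between the set of monadic filters of (L,∀) and the set of monadic congruences of (L,∀); its inverse sends a monadic congruence θ to the equivalence class of 1 under θ. -/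
open NMAlgebra

namespace NMAlgebraAux

open NMAlgebra

variable {L : Type*} [NMAlgebra L]

noncomputable instance : CommMonoid L where
  mul := odot
  one := ⊤
  mul_assoc := odot_assoc
  mul_one := odot_top
  one_mul := fun x => by show odot ⊤ x = x; rw [odot_comm]; exact odot_top x
  mul_comm := odot_comm

lemma odot_eq_mul (x y : L) : odot x y = x * y := rfl
lemma top_eq_one : (⊤ : L) = 1 := rfl
lemma le_one' (x : L) : x ≤ 1 := le_top

lemma le_imp_iff {x y z : L} : x ≤ imp y z ↔ x * y ≤ z := (residuation x y z).symm

lemma imp_mul_le (x y : L) : imp x y * x ≤ y := le_imp_iff.mp le_rfl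

instance : CovariantClass L L (· * ·) (· ≤ ·) :=
  ⟨fun c a b h => by
    change c * a ≤ c * b
    rw [mul_comm c a, mul_comm c b, ← le_imp_iff]
    exact h.trans (le_imp_iff.mpr le_rfl)⟩

instance : CovariantClass L L (Function.swap (· * ·)) (· ≤ ·) :=
  ⟨fun c a b h => by
    change a * c ≤ b * c
    rw [← le_imp_iff]
    exact h.trans (le_imp_iff.mpr le_rfl)⟩

lemma imp_self' (x : L) : imp x x = ⊤ :=
  le_antisymm le_top (le_imp_iff.mpr (le_of_eq (one_mul x)))

lemma imp_eq_top_of_le {x y : L} (h : x ≤ y) : imp x y = ⊤ :=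
  le_antisymm le_top (le_imp_iff.mpr ((le_of_eq (one_mul x)).trans h))

lemma le_of_imp_eq_top {x y : L} (h : imp x y = ⊤) : x ≤ y := by
  have := imp_mul_le x y
  rw [h, top_eq_one, one_mul] at this
  exact this

lemma imp_top' (x : L) : imp x ⊤ = ⊤ := imp_eq_top_of_le le_top

lemma top_imp (x : L) : imp ⊤ x = x := by
  refine le_antisymm ?_ (le_imp_iff.mpr (le_of_eq (mul_one x)))
  have := imp_mul_le ⊤ x
  rwa [top_eq_one, mul_one] at this

lemma imp_le_imp_left {a b : L} (c : L) (h : a ≤ b) : imp b c ≤ imp a c :=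
  le_imp_iff.mpr ((mul_le_mul_right h _).trans (imp_mul_le b c))

lemma imp_trans_le (x y z : L) : imp x y * imp y z ≤ imp x z := by
  rw [le_imp_iff]
  calc imp x y * imp y z * x = imp y z * (imp x y * x) := by ac_rfl
    _ ≤ imp y z * y := mul_le_mul_right (imp_mul_le x y) _
    _ ≤ z := imp_mul_le y z

lemma key_inf (a b c d : L) : imp a b * imp c d ≤ imp (a ⊓ c) (b ⊓ d) := by
  rw [le_imp_iff]
  refine le_inf ?_ ?_
  · calc imp a b * imp c d * (a ⊓ c) ≤ imp a b * imp c d * a :=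
        mul_le_mul_right inf_le_left _
      _ = imp c d * (imp a b * a) := by ac_rfl
      _ ≤ imp c d * b := mul_le_mul_right (imp_mul_le a b) _
      _ ≤ 1 * b := mul_le_mul_left (le_one' _) _
      _ = b := one_mul b
  · calc imp a b * imp c d * (a ⊓ c) ≤ imp a b * imp c d * c :=
        mul_le_mul_right inf_le_right _
      _ = imp a b * (imp c d * c) := by ac_rfl
      _ ≤ imp a b * d := mul_le_mul_right (imp_mul_le c d) _
      _ ≤ 1 * d := mul_le_mul_left (le_one' _) _
      _ = d := one_mul d

lemma key_sup (a b c d : L) : imp a b * imp c d ≤ imp (a ⊔ c) (b ⊔ d) := by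
  rw [le_imp_iff, mul_comm, ← le_imp_iff]
  refine sup_le ?_ ?_
  · rw [le_imp_iff]
    calc a * (imp a b * imp c d) = imp c d * (imp a b * a) := by ac_rfl
      _ ≤ imp c d * b := mul_le_mul_right (imp_mul_le a b) _
      _ ≤ 1 * b := mul_le_mul_left (le_one' _) _
      _ = b := one_mul b
      _ ≤ b ⊔ d := le_sup_left
  · rw [le_imp_iff]
    calc c * (imp a b * imp c d) = imp a b * (imp c d * c) := by ac_rfl
      _ ≤ imp a b * d := mul_le_mul_right (imp_mul_le c d) _
      _ ≤ 1 * d := mul_le_mul_left (le_one' _) _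
      _ = d := one_mul d
      _ ≤ b ⊔ d := le_sup_right

lemma key_mul (a b c d : L) : imp a b * imp c d ≤ imp (a * c) (b * d) := by
  rw [le_imp_iff]
  calc imp a b * imp c d * (a * c) = (imp a b * a) * (imp c d * c) := by ac_rfl
    _ ≤ b * d := mul_le_mul' (imp_mul_le a b) (imp_mul_le c d)

lemma key_imp (a b c d : L) : imp b a * imp c d ≤ imp (imp a c) (imp b d) := by
  rw [le_imp_iff, le_imp_iff]
  calc imp b a * imp c d * imp a c * b
      = imp c d * (imp a c * (imp b a * b)) := by ac_rfl
    _ ≤ imp c d * (imp a c * a) :=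
        mul_le_mul_right (mul_le_mul_right (imp_mul_le b a) _) _
    _ ≤ imp c d * c := mul_le_mul_right (imp_mul_le a c) _
    _ ≤ d := imp_mul_le c d

section UQ

variable {q : L → L}

lemma q_top (hq : IsUQ q) : q ⊤ = ⊤ := by
  have h := hq.2.2.1 ⊤ ⊤
  rw [imp_top', imp_self'] at h
  exact h

lemma q_mono (hq : IsUQ q) {x y : L} (h : x ≤ y) : q x ≤ q y := by
  have hxy : imp (q x) y = ⊤ := imp_eq_top_of_le ((hq.1 x).trans h)
  have h3 := hq.2.2.1 x y
  rw [hxy, q_top hq] at h3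
  exact le_of_imp_eq_top h3.symm

lemma q_imp_le (hq : IsUQ q) (x y : L) : q (imp x y) ≤ imp (q x) (q y) := by
  have h1 : imp x y ≤ imp (q x) y := imp_le_imp_left y (hq.1 x)
  have := q_mono hq h1
  rwa [hq.2.2.1 x y] at this

end UQ

end NMAlgebraAux

open NMAlgebraAux


/-- Theorem 4.9: `F ↦ θ_F` where `θ_F x y ↔ (x → y ∈ F ∧ y → x ∈ F)` is a
bijection between monadic filters and monadic congruences, with inverse
`θ ↦ {x | θ x 1}` (the class of `1`). -/
theorem monadic_nm_monadic_filters_biject_monadic_congruences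
    {L : Type*} [NMAlgebra L] (q : L → L) (hq : IsUQ q) :
    (∀ F : Set L, IsMonadicFilter q F →
      IsMonadicCong q (fun x y => imp x y ∈ F ∧ imp y x ∈ F)) ∧
    (∀ θ : L → L → Prop, IsMonadicCong q θ →
      IsMonadicFilter q {x : L | θ x ⊤}) ∧
    (∀ F : Set L, IsMonadicFilter q F →
      {x : L | imp x ⊤ ∈ F ∧ imp ⊤ x ∈ F} = F) ∧
    (∀ θ : L → L → Prop, IsMonadicCong q θ → ∀ x y : L,
      θ x y ↔ (θ (imp x y) ⊤ ∧ θ (imp y x) ⊤)) := by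
  refine ⟨?_, ?_, ?_, ?_⟩
  · -- filter to congruence
    rintro F ⟨⟨⟨w, hw⟩, hmul, hup⟩, hqF⟩
    have htop : (⊤ : L) ∈ F := hup w hw ⊤ le_top
    have memle : ∀ x ∈ F, ∀ y : L, x ≤ y → y ∈ F := hup
    have key : ∀ a b c : L, a ∈ F → b ∈ F → a * b ≤ c → c ∈ F := by
      intro a b c ha hb h
      exact memle _ (hmul a ha b hb) c h
    refine ⟨⟨?_, ?_, ?_⟩, ?_, ?_, ?_, ?_, ?_⟩
    · intro x; simp only [imp_self']; exact ⟨htop, htop⟩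
    · rintro x y ⟨h1, h2⟩; exact ⟨h2, h1⟩
    · rintro x y z ⟨h1, h2⟩ ⟨h3, h4⟩
      exact ⟨key _ _ _ h1 h3 (imp_trans_le x y z),
             key _ _ _ h4 h2 (imp_trans_le z y x)⟩
    · rintro a b c d ⟨h1, h2⟩ ⟨h3, h4⟩
      exact ⟨key _ _ _ h1 h3 (key_inf a b c d),
             key _ _ _ h2 h4 (key_inf b a d c)⟩
    · rintro a b c d ⟨h1, h2⟩ ⟨h3, h4⟩
      exact ⟨key _ _ _ h1 h3 (key_sup a b c d),
             key _ _ _ h2 h4 (key_sup b a d c)⟩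
    · rintro a b c d ⟨h1, h2⟩ ⟨h3, h4⟩
      exact ⟨key _ _ _ h1 h3 (key_mul a b c d),
             key _ _ _ h2 h4 (key_mul b a d c)⟩
    · rintro a b c d ⟨h1, h2⟩ ⟨h3, h4⟩
      exact ⟨key _ _ _ h2 h3 (key_imp a b c d),
             key _ _ _ h1 h4 (key_imp b a d c)⟩
    · rintro a b ⟨h1, h2⟩
      exact ⟨memle _ (hqF _ h1) _ (q_imp_le hq a b),
             memle _ (hqF _ h2) _ (q_imp_le hq b a)⟩
  · -- congruence to filter
    rintro θ ⟨heq, hinf, hsup, hmul, himp, hQ⟩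
    refine ⟨⟨⟨⊤, heq.refl ⊤⟩, ?_, ?_⟩, ?_⟩
    · intro x hx y hy
      have := hmul x ⊤ y ⊤ hx hy
      simpa only [Set.mem_setOf_eq, odot_eq_mul, mul_one, top_eq_one] using this
    · intro x hx y hxy
      have := hsup x ⊤ y y hx (heq.refl y)
      rw [sup_eq_right.mpr hxy, top_sup_eq] at this
      exact this
    · intro x hx
      have := hQ x ⊤ hx
      rw [q_top hq] at this
      exact this
  · -- θ_F class of ⊤ is F
    rintro F ⟨⟨⟨w, hw⟩, hmul, hup⟩, hqF⟩
    have htop : (⊤ : L) ∈ F := hup w hw ⊤ le_top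
    ext x
    simp [imp_top', top_imp, htop]
  · -- congruence recovered from class of ⊤
    rintro θ ⟨heq, hinf, hsup, hmul, himp, hQ⟩ x y
    constructor
    · intro h
      constructor
      · have := himp x y y y h (heq.refl y)
        rwa [imp_self'] at this
      · have := himp y x x x (heq.symm h) (heq.refl x)
        rwa [imp_self'] at this
    · rintro ⟨h1, h2⟩
      have step : ∀ a b : L, θ (imp a b) ⊤ → θ (a ⊓ b) a := by
        intro a b hab
        have s1 : θ (a * imp a b) a := by
          have := hmul a a (imp a b) ⊤ (heq.refl a) hab
          rwa [odot_eq_mul, odot_eq_mul, top_eq_one, mul_one] at this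
        have e1 : a * imp a b ≤ a ⊓ b := by
          refine le_inf ?_ ?_
          · calc a * imp a b ≤ a * 1 := mul_le_mul_right (le_one' _) _
              _ = a := mul_one a
          · rw [mul_comm]; exact imp_mul_le a b
        have s2 : θ ((a * imp a b) ⊔ (a ⊓ b)) (a ⊔ (a ⊓ b)) :=
          hsup _ _ _ _ s1 (heq.refl (a ⊓ b))
        rwa [sup_eq_right.mpr e1, sup_inf_self] at s2
      have t1 : θ (x ⊓ y) x := step x y h1
      have t2 : θ (x ⊓ y) y := by
        have := step y x h2
        rwa [inf_comm y x] at this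
      exact heq.trans (heq.symm t1) t2
end
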